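/- For every n ≥ 0 the recurrence coefficient α_n satisfies α_n = t(r*_{n+1} − r*_n) − (t−1)(r_{n+1} − r_n) + t, and consequently the subleading coefficient of P_n satisfies p₁(n) = (t−1)r_n − t r*_n − nt for every n ≥ 0. -/

import Mathlib

open MeasureTheory Real

/-- The generalized Jacobi weight `w(x;t) = (x-t)^γ x^α (1-x)^β`. -/
noncomputable def genJacobiWeight (α β γ t x : ℝ) : ℝ :=
  (x - t) ^ γ * x ^ α * (1 - x) ^ β

/-!
Since `w' = γ w/(x-t) + α w/x - β w/(1-x)` on `(0, 1)` and `w` vanishes at both endpoints,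
integrating `((x - t) Q)' w` by parts gives, for every polynomial `Q`, an identity in which the
factor `x - t` turns the `γ`-term into `γ ∫ Q w`. For `Q = P_m P_{m+1}` orthogonality kills
`∫ Q w` and evaluates `∫ (x - t) Q' w = -(p₁(m+1) + (m+1) t) h_m`, while the two remaining
integrals are `r_{m+1} h_m` and `r*_{m+1} h_m`: this is the formula for `p₁`. Comparing the
coefficients of `xⁿ` in the three-term recurrence gives `α_n = p₁(n) - p₁(n+1)`.

The weights `w/x`, `w/(1-x)` and `w/(x-t)` are handled as `genJacobiWeight` with `α`, `β`, `γ`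
lowered by one.
-/

open Polynomial Set intervalIntegral

theorem Polynomial.coeff_X_sub_C_mul_derivative {R : Type*} [CommRing R] (p : R[X]) (t : R)
    (n : ℕ) :
    ((X - C t) * derivative p).coeff n = n * p.coeff n - t * ((n + 1) * p.coeff (n + 1)) := by
  cases n <;> simp [sub_mul, coeff_derivative, coeff_X_mul]
  ring

theorem Polynomial.natDegree_X_sub_C_mul_derivative_le {R : Type*} [CommRing R] (p : R[X])
    (t : R) : ((X - C t) * derivative p).natDegree ≤ p.natDegree :=
  natDegree_le_iff_coeff_eq_zero.2 fun n hn => by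
    rw [coeff_X_sub_C_mul_derivative, coeff_eq_zero_of_natDegree_lt hn,
      coeff_eq_zero_of_natDegree_lt (by omega)]
    ring

theorem Polynomial.degree_sub_C_coeff_mul_lt {R : Type*} [Ring R] {p Q : R[X]} {d : ℕ}
    (hp : p.Monic) (hpd : p.natDegree = d) (hQ : Q.degree < ↑(d + 1)) :
    (Q - C (Q.coeff d) * p).degree < d := by
  rw [degree_lt_iff_coeff_zero] at hQ ⊢
  intro k hk
  rcases hk.eq_or_lt with rfl | hk
  · simp [← hpd, hp.coeff_natDegree]
  · simp [hQ k hk, coeff_eq_zero_of_natDegree_lt (hpd ▸ hk)]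

section Orthogonal

variable {w : ℝ → ℝ} {a b : ℝ} {P : ℕ → ℝ[X]} {h : ℕ → ℝ}

theorem integral_eval_mul_eq_add_integral_sub_C_mul
    (hint : ∀ p q : ℝ[X], IntervalIntegrable (fun x => p.eval x * q.eval x * w x) volume a b)
    (Q p q : ℝ[X]) (c : ℝ) :
    ∫ x in a..b, Q.eval x * q.eval x * w x
      = c * (∫ x in a..b, p.eval x * q.eval x * w x)
        + ∫ x in a..b, (Q - C c * p).eval x * q.eval x * w x := by
  rw [← intervalIntegral.integral_const_mul, ← integral_add ((hint p q).const_mul c) (hint _ q)]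
  congr 1 with x
  simp only [eval_sub, eval_mul, eval_C]
  ring

theorem integral_eval_mul_orthogonal_of_degree_lt
    (hmonic : ∀ n, (P n).Monic ∧ (P n).natDegree = n)
    (horth : ∀ m n, ∫ x in a..b, (P m).eval x * (P n).eval x * w x = if m = n then h n else 0)
    (hint : ∀ p q : ℝ[X], IntervalIntegrable (fun x => p.eval x * q.eval x * w x) volume a b)
    {Q : ℝ[X]} {m : ℕ} (hQ : Q.degree < ↑(m + 1)) :
    ∫ x in a..b, Q.eval x * (P m).eval x * w x = Q.coeff m * h m := by
  suffices ∀ d ≤ m + 1, ∀ R : ℝ[X], R.degree < d →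
      ∫ x in a..b, R.eval x * (P m).eval x * w x = R.coeff m * h m from this _ le_rfl Q hQ
  intro d
  induction d with
  | zero =>
    intro _ R hR
    obtain rfl : R = 0 := by simpa using hR
    simp
  | succ d ih =>
    intro hd R hR
    rw [integral_eval_mul_eq_add_integral_sub_C_mul hint R (P d) (P m) (R.coeff d),
      ih (by omega) _ (degree_sub_C_coeff_mul_lt (hmonic d).1 (hmonic d).2 hR), horth,
      coeff_sub, coeff_C_mul]
    rcases (by omega : d = m ∨ d < m) with rfl | hdm
    · have hlead : (P d).coeff d = 1 := by
        simpa [(hmonic d).2] using (hmonic d).1.coeff_natDegree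
      rw [if_pos rfl, hlead]
      ring
    · rw [if_neg hdm.ne,
        coeff_eq_zero_of_natDegree_lt (p := P d) (by rw [(hmonic d).2]; exact hdm)]
      ring

theorem integral_eval_mul_orthogonal_of_natDegree_le_succ
    (hmonic : ∀ n, (P n).Monic ∧ (P n).natDegree = n)
    (horth : ∀ m n, ∫ x in a..b, (P m).eval x * (P n).eval x * w x = if m = n then h n else 0)
    (hint : ∀ p q : ℝ[X], IntervalIntegrable (fun x => p.eval x * q.eval x * w x) volume a b)
    {Q : ℝ[X]} {m : ℕ} (hQ : Q.natDegree ≤ m + 1) :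
    ∫ x in a..b, Q.eval x * (P m).eval x * w x
      = (Q.coeff m - Q.coeff (m + 1) * (P (m + 1)).coeff m) * h m := by
  have hQ' : Q.degree < ↑(m + 1 + 1) :=
    (degree_lt_iff_coeff_zero _ _).2 fun k hk => coeff_eq_zero_of_natDegree_lt (by omega)
  rw [integral_eval_mul_eq_add_integral_sub_C_mul hint Q (P (m + 1)) (P m) (Q.coeff (m + 1)),
    horth, if_neg (by omega), integral_eval_mul_orthogonal_of_degree_lt hmonic horth hint
      (degree_sub_C_coeff_mul_lt (hmonic (m + 1)).1 (hmonic (m + 1)).2 hQ'),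
    coeff_sub, coeff_C_mul]
  ring

end Orthogonal

section Weight

variable {α β γ t x : ℝ}

theorem genJacobiWeight_eq_sub_mul (hx : x ≠ t) :
    genJacobiWeight α β γ t x = (x - t) * genJacobiWeight α β (γ - 1) t x := by
  rw [genJacobiWeight, genJacobiWeight, rpow_sub_one (sub_ne_zero.2 hx)]
  field_simp [sub_ne_zero.2 hx]

theorem genJacobiWeight_eq_mul (hx : x ≠ 0) :
    genJacobiWeight α β γ t x = x * genJacobiWeight (α - 1) β γ t x := by
  rw [genJacobiWeight, genJacobiWeight, rpow_sub_one hx]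
  field_simp

theorem genJacobiWeight_eq_one_sub_mul (hx : x ≠ 1) :
    genJacobiWeight α β γ t x = (1 - x) * genJacobiWeight α (β - 1) γ t x := by
  rw [genJacobiWeight, genJacobiWeight, rpow_sub_one (sub_ne_zero.2 hx.symm)]
  field_simp [sub_ne_zero.2 hx.symm]

theorem genJacobiWeight_zero (hα : α ≠ 0) : genJacobiWeight α β γ t 0 = 0 := by
  simp [genJacobiWeight, zero_rpow hα]

theorem genJacobiWeight_one (hβ : β ≠ 0) : genJacobiWeight α β γ t 1 = 0 := by
  simp [genJacobiWeight, zero_rpow hβ]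

theorem continuousOn_genJacobiWeight (ht : t < 0) (hα : 0 ≤ α) (hβ : 0 ≤ β) :
    ContinuousOn (genJacobiWeight α β γ t) (Icc 0 1) := by
  intro x hx
  refine ContinuousAt.continuousWithinAt ?_
  have hxt : x - t ≠ 0 := by linarith [hx.1]
  exact (((continuous_id.sub continuous_const).continuousAt.rpow_const (Or.inl hxt)).mul
    (continuousAt_rpow_const x α (Or.inr hα))).mul
    ((continuous_rpow_const hβ).continuousAt.comp (continuous_const.sub continuous_id).continuousAt)

theorem hasDerivAt_genJacobiWeight (hxt : x ≠ t) (hx0 : x ≠ 0) (hx1 : x ≠ 1) :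
    HasDerivAt (genJacobiWeight α β γ t)
      (γ * genJacobiWeight α β (γ - 1) t x + α * genJacobiWeight (α - 1) β γ t x
        - β * genJacobiWeight α (β - 1) γ t x) x := by
  have hu := ((hasDerivAt_id x).sub_const t).rpow_const (p := γ) (Or.inl (sub_ne_zero.2 hxt))
  have hv := (hasDerivAt_id x).rpow_const (p := α) (Or.inl hx0)
  have hs := ((hasDerivAt_id x).const_sub 1).rpow_const (p := β) (Or.inl (sub_ne_zero.2 hx1.symm))
  refine ((hu.mul hv).mul hs).congr_deriv ?_
  simp only [genJacobiWeight, id, Pi.mul_apply]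
  ring

/-- Near each endpoint only one factor of the weight is singular; split `[0, 1]` at `1/2`. -/
theorem intervalIntegrable_mul_genJacobiWeight (ht : t < 0) (hα : -1 < α) (hβ : -1 < β)
    {f : ℝ → ℝ} (hf : Continuous f) :
    IntervalIntegrable (fun x => f x * genJacobiWeight α β γ t x) volume 0 1 := by
  have hxt : ∀ x ∈ Icc (0:ℝ) 1, x - t ≠ 0 := fun x hx => by linarith [hx.1]
  have hpow_t : ContinuousOn (fun x : ℝ => (x - t) ^ γ) (Icc 0 1) := fun x hx =>
    ((continuous_id.sub continuous_const).continuousAt.rpow_const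
      (Or.inl (hxt x hx))).continuousWithinAt
  have hleft : IntervalIntegrable (fun x => f x * genJacobiWeight α β γ t x) volume 0 (1/2) := by
    have hg : ContinuousOn (fun x : ℝ => f x * (x - t) ^ γ * (1 - x) ^ β) (uIcc 0 (1/2)) := by
      rw [uIcc_of_le (by norm_num)]
      refine (hf.continuousOn.mul (hpow_t.mono (Icc_subset_Icc_right (by norm_num)))).mul
        fun x hx => ?_
      exact ((continuous_const.sub continuous_id).continuousAt.rpow_const
        (Or.inl (by simp only [Pi.sub_apply, id]; linarith [hx.2]))).continuousWithinAt
    refine ((intervalIntegrable_rpow' hα).continuousOn_mul hg).congr fun x _ => ?_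
    simp only [genJacobiWeight]; ring
  have hright : IntervalIntegrable (fun x => f x * genJacobiWeight α β γ t x) volume (1/2) 1 := by
    have hg : ContinuousOn (fun x : ℝ => f x * (x - t) ^ γ * x ^ α) (uIcc (1/2) 1) := by
      rw [uIcc_of_le (by norm_num)]
      refine (hf.continuousOn.mul (hpow_t.mono (Icc_subset_Icc_left (by norm_num)))).mul
        fun x hx => ?_
      exact (continuousAt_rpow_const x α (Or.inl (by linarith [hx.1]))).continuousWithinAt
    have hsing : IntervalIntegrable (fun x : ℝ => (1 - x) ^ β) volume (1/2) 1 := by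
      convert ((intervalIntegrable_rpow' hβ (a := 0) (b := 1/2)).comp_sub_left 1).symm using 1 <;>
        norm_num
    refine (hsing.continuousOn_mul hg).congr fun x _ => ?_
    simp only [genJacobiWeight]; ring
  exact hleft.trans hright

theorem integral_derivative_mul_genJacobiWeight (ht : t < 0) (hα : 0 < α) (hβ : 0 < β)
    (Q : ℝ[X]) :
    ∫ x in 0..1, (derivative Q).eval x * genJacobiWeight α β γ t x
      = β * (∫ x in 0..1, Q.eval x * genJacobiWeight α (β - 1) γ t x)
        - α * (∫ x in 0..1, Q.eval x * genJacobiWeight (α - 1) β γ t x)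
        - γ * ∫ x in 0..1, Q.eval x * genJacobiWeight α β (γ - 1) t x := by
  have hα' : -1 < α := by linarith
  have hβ' : -1 < β := by linarith
  have hw := intervalIntegrable_mul_genJacobiWeight (γ := γ) ht hα' hβ' (derivative Q).continuous
  have hwγ := intervalIntegrable_mul_genJacobiWeight (γ := γ - 1) ht hα' hβ' Q.continuous
  have hwα := intervalIntegrable_mul_genJacobiWeight (γ := γ) ht (by linarith : -1 < α - 1) hβ'
    Q.continuous
  have hwβ := intervalIntegrable_mul_genJacobiWeight (γ := γ) ht hα' (by linarith : -1 < β - 1)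
    Q.continuous
  have hderiv : ∀ x ∈ Ioo (0:ℝ) 1, HasDerivAt (fun x => Q.eval x * genJacobiWeight α β γ t x)
      ((derivative Q).eval x * genJacobiWeight α β γ t x
        + (γ * (Q.eval x * genJacobiWeight α β (γ - 1) t x)
          + α * (Q.eval x * genJacobiWeight (α - 1) β γ t x)
          - β * (Q.eval x * genJacobiWeight α (β - 1) γ t x))) x := by
    intro x hx
    refine ((Q.hasDerivAt x).mul (hasDerivAt_genJacobiWeight (by linarith [hx.1])
      hx.1.ne' hx.2.ne)).congr_deriv ?_
    ring
  have hcont : ContinuousOn (fun x => Q.eval x * genJacobiWeight α β γ t x) (Icc 0 1) :=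
    Q.continuous.continuousOn.mul (continuousOn_genJacobiWeight ht hα.le hβ.le)
  have hrest := ((hwγ.const_mul γ).add (hwα.const_mul α)).sub (hwβ.const_mul β)
  have hFTC := integral_eq_sub_of_hasDerivAt_of_le zero_le_one hcont hderiv (hw.add hrest)
  rw [genJacobiWeight_zero hα.ne', genJacobiWeight_one hβ.ne', integral_add hw hrest,
    integral_sub ((hwγ.const_mul γ).add (hwα.const_mul α)) (hwβ.const_mul β),
    integral_add (hwγ.const_mul γ) (hwα.const_mul α)] at hFTC
  simp only [intervalIntegral.integral_const_mul, mul_zero, sub_zero] at hFTC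
  linarith

theorem integral_sub_mul_derivative_mul_genJacobiWeight (ht : t < 0) (hα : 0 < α) (hβ : 0 < β)
    (Q : ℝ[X]) :
    ∫ x in 0..1, ((X - C t) * derivative Q).eval x * genJacobiWeight α β γ t x
      = (1 - t) * β * (∫ x in 0..1, Q.eval x * genJacobiWeight α (β - 1) γ t x)
        + t * α * (∫ x in 0..1, Q.eval x * genJacobiWeight (α - 1) β γ t x)
        - (α + β + γ + 1) * ∫ x in 0..1, Q.eval x * genJacobiWeight α β γ t x := by
  have hα' : -1 < α := by linarith
  have hβ' : -1 < β := by linarith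
  have hw := intervalIntegrable_mul_genJacobiWeight (γ := γ) ht hα' hβ' Q.continuous
  have hwα := intervalIntegrable_mul_genJacobiWeight (γ := γ) ht (by linarith : -1 < α - 1) hβ'
    Q.continuous
  have hwβ := intervalIntegrable_mul_genJacobiWeight (γ := γ) ht hα' (by linarith : -1 < β - 1)
    Q.continuous
  have hderiv : ∫ x in 0..1, (derivative ((X - C t) * Q)).eval x * genJacobiWeight α β γ t x
      = (∫ x in 0..1, Q.eval x * genJacobiWeight α β γ t x)
        + ∫ x in 0..1, ((X - C t) * derivative Q).eval x * genJacobiWeight α β γ t x := by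
    simp only [derivative_mul, derivative_sub, derivative_X, derivative_C, sub_zero, one_mul,
      eval_add, add_mul]
    exact integral_add hw (intervalIntegrable_mul_genJacobiWeight ht hα' hβ' (by fun_prop))
  have hshiftβ : ∫ x in 0..1, ((X - C t) * Q).eval x * genJacobiWeight α (β - 1) γ t x
      = (1 - t) * (∫ x in 0..1, Q.eval x * genJacobiWeight α (β - 1) γ t x)
        - ∫ x in 0..1, Q.eval x * genJacobiWeight α β γ t x := by
    rw [← intervalIntegral.integral_const_mul, ← integral_sub (hwβ.const_mul _) hw]
    refine integral_congr_Ioo_of_le zero_le_one fun x hx => ?_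
    rw [genJacobiWeight_eq_one_sub_mul (α := α) (β := β) (γ := γ) (t := t) hx.2.ne]
    simp only [eval_mul, eval_sub, eval_X, eval_C]
    ring
  have hshiftα : ∫ x in 0..1, ((X - C t) * Q).eval x * genJacobiWeight (α - 1) β γ t x
      = (∫ x in 0..1, Q.eval x * genJacobiWeight α β γ t x)
        - t * ∫ x in 0..1, Q.eval x * genJacobiWeight (α - 1) β γ t x := by
    rw [← intervalIntegral.integral_const_mul, ← integral_sub hw (hwα.const_mul _)]
    refine integral_congr_Ioo_of_le zero_le_one fun x hx => ?_
    rw [genJacobiWeight_eq_mul (α := α) (β := β) (γ := γ) (t := t) hx.1.ne']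
    simp only [eval_mul, eval_sub, eval_X, eval_C]
    ring
  have hshiftγ : ∫ x in 0..1, ((X - C t) * Q).eval x * genJacobiWeight α β (γ - 1) t x
      = ∫ x in 0..1, Q.eval x * genJacobiWeight α β γ t x := by
    refine integral_congr_Ioo_of_le zero_le_one fun x hx => ?_
    rw [genJacobiWeight_eq_sub_mul (α := α) (β := β) (γ := γ) (t := t) (by linarith [hx.1])]
    simp only [eval_mul, eval_sub, eval_X, eval_C]
    ring
  have h := integral_derivative_mul_genJacobiWeight (γ := γ) ht hα hβ ((X - C t) * Q)
  rw [hderiv, hshiftβ, hshiftα, hshiftγ] at h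
  linear_combination h

theorem integral_eval_mul_genJacobiWeight_div_self (Q : ℝ[X]) :
    ∫ x in 0..1, Q.eval x * genJacobiWeight α β γ t x / x
      = ∫ x in 0..1, Q.eval x * genJacobiWeight (α - 1) β γ t x :=
  integral_congr_Ioo_of_le zero_le_one fun x hx => by
    rw [genJacobiWeight_eq_mul (α := α) hx.1.ne']
    field_simp [hx.1.ne']

theorem integral_eval_mul_genJacobiWeight_div_one_sub (Q : ℝ[X]) :
    ∫ x in 0..1, Q.eval x * genJacobiWeight α β γ t x / (1 - x)
      = ∫ x in 0..1, Q.eval x * genJacobiWeight α (β - 1) γ t x :=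
  integral_congr_Ioo_of_le zero_le_one fun x hx => by
    rw [genJacobiWeight_eq_one_sub_mul (β := β) hx.2.ne]
    field_simp [sub_ne_zero.2 hx.2.ne']

end Weight

theorem coeff_mul_eq_of_orthogonal_genJacobiWeight {α β γ t : ℝ} (ht : t < 0) (hα : 0 < α)
    (hβ : 0 < β) {P : ℕ → ℝ[X]} {h : ℕ → ℝ}
    (hmonic : ∀ n, (P n).Monic ∧ (P n).natDegree = n)
    (horth : ∀ m n, ∫ x in (0:ℝ)..1, (P m).eval x * (P n).eval x * genJacobiWeight α β γ t x
      = if m = n then h n else 0) (m : ℕ) :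
    (P (m + 1)).coeff m * h m
      = (t - 1) * β * (∫ x in 0..1, (P m * P (m + 1)).eval x * genJacobiWeight α (β - 1) γ t x)
        - t * α * (∫ x in 0..1, (P m * P (m + 1)).eval x * genJacobiWeight (α - 1) β γ t x)
        - (m + 1) * t * h m := by
  have hint (p q : ℝ[X]) : IntervalIntegrable
      (fun x => p.eval x * q.eval x * genJacobiWeight α β γ t x) volume 0 1 :=
    intervalIntegrable_mul_genJacobiWeight ht (by linarith) (by linarith) (by fun_prop)
  have hsplit : ∫ x in 0..1, ((X - C t) * derivative (P m * P (m + 1))).eval x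
        * genJacobiWeight α β γ t x
      = (∫ x in 0..1, ((X - C t) * derivative (P m)).eval x * (P (m + 1)).eval x
          * genJacobiWeight α β γ t x)
        + ∫ x in 0..1, ((X - C t) * derivative (P (m + 1))).eval x * (P m).eval x
          * genJacobiWeight α β γ t x := by
    rw [← integral_add (hint _ _) (hint _ _)]
    congr 1 with x
    simp only [derivative_mul, eval_mul, eval_add]
    ring
  have hlead : (P (m + 1)).coeff (m + 1) = 1 := by
    simpa [(hmonic (m + 1)).2] using (hmonic (m + 1)).1.coeff_natDegree
  have hlow : ∫ x in 0..1, ((X - C t) * derivative (P m)).eval x * (P (m + 1)).eval x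
      * genJacobiWeight α β γ t x = 0 := by
    have hPm : (P m).natDegree = m := (hmonic m).2
    have hdeg : ((X - C t) * derivative (P m)).degree < ↑(m + 1 + 1) :=
      (degree_le_of_natDegree_le ((natDegree_X_sub_C_mul_derivative_le _ _).trans
        hPm.le)).trans_lt (by exact_mod_cast (by omega : m < m + 1 + 1))
    rw [integral_eval_mul_orthogonal_of_degree_lt hmonic horth hint hdeg,
      coeff_X_sub_C_mul_derivative, coeff_eq_zero_of_natDegree_lt (p := P m) (by omega),
      coeff_eq_zero_of_natDegree_lt (p := P m) (by omega)]
    ring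
  have htop : ∫ x in 0..1, ((X - C t) * derivative (P (m + 1))).eval x * (P m).eval x
      * genJacobiWeight α β γ t x = (-(P (m + 1)).coeff m - (m + 1) * t) * h m := by
    rw [integral_eval_mul_orthogonal_of_natDegree_le_succ hmonic horth hint
      ((natDegree_X_sub_C_mul_derivative_le _ _).trans (hmonic (m + 1)).2.le),
      coeff_X_sub_C_mul_derivative, coeff_X_sub_C_mul_derivative, hlead,
      coeff_eq_zero_of_natDegree_lt (p := P (m + 1)) (n := m + 1 + 1)
        (by rw [(hmonic _).2]; omega)]
    push_cast
    ring
  have hvanish : ∫ x in 0..1, (P m * P (m + 1)).eval x * genJacobiWeight α β γ t x = 0 := by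
    simp only [eval_mul]
    rw [horth, if_neg (by omega)]
  have key := integral_sub_mul_derivative_mul_genJacobiWeight (γ := γ) ht hα hβ (P m * P (m + 1))
  rw [hsplit, hlow, htop, hvanish] at key
  linear_combination -key

theorem recurrence_coeff_eq_sub {P : ℕ → ℝ[X]} {a b p1 : ℕ → ℝ}
    (hmonic : ∀ n, (P n).Monic ∧ (P n).natDegree = n) (hb0 : b 0 = 0)
    (hrec : ∀ n, ∀ x : ℝ, x * (P n).eval x
      = (P (n + 1)).eval x + a n * (P n).eval x + b n * (P (n - 1)).eval x)
    (hp10 : p1 0 = 0) (hp1 : ∀ n, 1 ≤ n → p1 n = (P n).coeff (n - 1)) (n : ℕ) :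
    a n = p1 n - p1 (n + 1) := by
  have hpoly : P (n + 1) = X * P n - C (a n) * P n - C (b n) * P (n - 1) :=
    Polynomial.funext fun x => by
      simp only [eval_sub, eval_mul, eval_X, eval_C]
      linarith [hrec n x]
  have hcoeff := congrArg (coeff · n) hpoly
  simp only [coeff_sub, coeff_C_mul] at hcoeff
  have hlead : (P n).coeff n = 1 := by simpa [(hmonic n).2] using (hmonic n).1.coeff_natDegree
  have hX : (X * P n).coeff n = p1 n := by
    cases n with
    | zero => simp [hp10]
    | succ k => rw [coeff_X_mul, hp1 _ (by omega), Nat.add_sub_cancel]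
  have hlow : b n * (P (n - 1)).coeff n = 0 := by
    cases n with
    | zero => simp [hb0]
    | succ k => rw [coeff_eq_zero_of_natDegree_lt (by rw [(hmonic _).2]; omega), mul_zero]
  rw [hp1 (n + 1) (by omega), Nat.add_sub_cancel, hcoeff, hX, hlead, hlow]
  ring

theorem statement12
    (α β γ t : ℝ) (hα : 0 < α) (hβ : 0 < β) (ht : t < 0)
    (P : ℕ → Polynomial ℝ) (h : ℕ → ℝ)
    (hmonic : ∀ n, (P n).Monic ∧ (P n).natDegree = n)
    (hpos : ∀ n, 0 < h n)
    (horth : ∀ m n, (∫ x in (0:ℝ)..1,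
        (P m).eval x * (P n).eval x * genJacobiWeight α β γ t x)
      = if m = n then h n else 0)
    (a b : ℕ → ℝ) (hb0 : b 0 = 0)
    (hrec : ∀ n, ∀ x : ℝ, x * (P n).eval x
      = (P (n + 1)).eval x + a n * (P n).eval x + b n * (P (n - 1)).eval x)
    (p1 : ℕ → ℝ) (hp10 : p1 0 = 0)
    (hp1 : ∀ n, 1 ≤ n → p1 n = (P n).coeff (n - 1))
    (r rs : ℕ → ℝ)
    (hr0 : r 0 = 0) (hrs0 : rs 0 = 0)
    (hr : ∀ n, 1 ≤ n → r n = β / h (n - 1) *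
      ∫ y in (0:ℝ)..1, (P (n - 1)).eval y * (P n).eval y * genJacobiWeight α β γ t y / (1 - y))
    (hrs : ∀ n, 1 ≤ n → rs n = α / h (n - 1) *
      ∫ y in (0:ℝ)..1, (P (n - 1)).eval y * (P n).eval y * genJacobiWeight α β γ t y / y)
    :
    (∀ n : ℕ, a n = t * (rs (n + 1) - rs n) - (t - 1) * (r (n + 1) - r n) + t) ∧
    (∀ n : ℕ, p1 n = (t - 1) * r n - t * rs n - n * t) := by
  have hp1_eq (n : ℕ) : p1 n = (t - 1) * r n - t * rs n - n * t := by
    cases n with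
    | zero => simp [hp10, hr0, hrs0]
    | succ m =>
      have key := coeff_mul_eq_of_orthogonal_genJacobiWeight ht hα hβ hmonic horth m
      have hm := (hpos m).ne'
      simp only [← eval_mul, integral_eval_mul_genJacobiWeight_div_self,
        integral_eval_mul_genJacobiWeight_div_one_sub] at hr hrs
      rw [hp1 _ le_add_self, hr _ le_add_self, hrs _ le_add_self, Nat.add_sub_cancel]
      field_simp
      push_cast
      linear_combination key
  refine ⟨fun n => ?_, hp1_eq⟩
  rw [recurrence_coeff_eq_sub hmonic hb0 hrec hp10 hp1, hp1_eq, hp1_eq]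
  push_cast
  ring
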